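/- Equivariance of α-sets: Let x ∈ X, σ ∈ S^G_{<∞} with domain d and range c, f ∈ G, and let α ≥ 1 be a countable ordinal. Then: (a) B_α(f·x, σ) = B_α(x, σf), where σf denotes the composition σ∘f restricted to f⁻¹[d]; in particular B_α(f·x, σ) = B_α(x, σ) for every f ∈ V^G_d; (b) f·B_α(x,σ) = B_α(x, fσ), where fσ denotes the composition f∘σ (an element of S^G_{<∞} with domain d); in particular f·B_α(x,σ) = B_α(x,σ) for every f ∈ V^G_c. -/

import Mathlib

open Set Pointwise

noncomputable section

/-- `S_∞`, the group of all permutations of `ℕ`. -/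
abbrev Sinf : Type := Equiv.Perm ℕ

/-- The topology of pointwise convergence on `S_∞`. -/
instance SinfTopology : TopologicalSpace Sinf :=
  TopologicalSpace.induced (fun g : Sinf => (g : ℕ → ℕ)) Pi.topologicalSpace

/-- The graph of the restriction of a permutation `g` to a finite set `d`. -/
def restr (g : Sinf) (d : Finset ℕ) : Set (ℕ × ℕ) := {p | p.1 ∈ d ∧ g p.1 = p.2}

/-- The domain of a partial map coded by its graph. -/
def pdom (σ : Set (ℕ × ℕ)) : Set ℕ := Prod.fst '' σ

/-- The range of a partial map coded by its graph. -/
def prng (σ : Set (ℕ × ℕ)) : Set ℕ := Prod.snd '' σ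

/-- `S^G_{<∞}`: graphs of restrictions of elements of `G` to finite subsets of `ℕ`. -/
def SGfin (G : Subgroup Sinf) : Set (Set (ℕ × ℕ)) :=
  {σ | ∃ g ∈ G, ∃ d : Finset ℕ, σ = restr g d}

/-- `V^G_σ`: the elements of `G` extending the partial bijection `σ`. -/
def Vb (G : Subgroup Sinf) (σ : Set (ℕ × ℕ)) : Set G :=
  {g : G | ∀ p ∈ σ, (g : Sinf) p.1 = p.2}

/-- `V^G_c`: the pointwise stabilizer of `c ⊆ ℕ` in `G`. -/
def Vc (G : Subgroup Sinf) (c : Set ℕ) : Set G :=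
  {g : G | ∀ k ∈ c, (g : Sinf) k = k}

/-- The identity partial bijection on `c`. -/
def idb (c : Set ℕ) : Set (ℕ × ℕ) := {p | p.1 ∈ c ∧ p.2 = p.1}

/-- The composition `σ ∘ f`, restricted to `f⁻¹[dom σ]`. -/
def compR (σ : Set (ℕ × ℕ)) (f : Sinf) : Set (ℕ × ℕ) := {p | (f p.1, p.2) ∈ σ}

/-- The composition `f ∘ σ`. -/
def compL (f : Sinf) (σ : Set (ℕ × ℕ)) : Set (ℕ × ℕ) := {p | (p.1, f⁻¹ p.2) ∈ σ}

/-- The Borel classes `Σ⁰_α(X)`: `Σ⁰_1(X)` consists of the open sets, and for `α > 1`,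
`Σ⁰_α(X)` consists of countable unions of sets whose complements lie in
`⋃_{1 ≤ β < α} Σ⁰_β(X)` (i.e. of sets from `⋃_{1 ≤ β < α} Π⁰_β(X)`). -/
def SigmaB (X : Type*) [TopologicalSpace X] (α : Ordinal.{0}) : Set (Set X) :=
  if α ≤ 1 then {s | IsOpen s}
  else {s | ∃ f : ℕ → Set X,
      (∀ n, ∃ β : {γ : Ordinal.{0} // γ < α}, 1 ≤ β.1 ∧ (f n)ᶜ ∈ SigmaB X β.1) ∧
      s = ⋃ n, f n}
termination_by α
decreasing_by exact β.2

/-- The Borel classes `Π⁰_α(X)`: complements of sets in `Σ⁰_α(X)`. -/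
def PiB (X : Type*) [TopologicalSpace X] (α : Ordinal.{0}) : Set (Set X) :=
  {s | sᶜ ∈ SigmaB X α}

section Action

variable (G : Subgroup Sinf) {X : Type*} [TopologicalSpace X] [MulAction G X]

/-- The image `S • x` of a point under a set of group elements. -/
def setOrb (S : Set G) (x : X) : Set X := (fun g : G => g • x) '' S

/-- The image `S • B` of a set under a set of group elements. -/
def setSmul (S : Set G) (B : Set X) : Set X := ⋃ g ∈ S, g • B

/-- The `1`-sets `B₁(x, σ)`. -/
def BsetOne (A : ℕ → Set X) (σ : Set (ℕ × ℕ)) (x : X) : Set X :=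
  (⋂ l, ⋂ (_ : (setOrb G (Vb G σ) x ∩ A l).Nonempty), setSmul G (Vc G (prng σ)) (A l)) ∩
    (⋂ l, ⋂ (_ : setOrb G (Vb G σ) x ∩ A l = ∅), (setSmul G (Vc G (prng σ)) (A l))ᶜ)

/-- The successor step of the recursion defining the `α`-sets. -/
def BsetSucc (prev : Set (ℕ × ℕ) → X → Set X) (σ : Set (ℕ × ℕ)) (x : X) : Set X :=
  (⋂ b : Finset ℕ, ⋂ (_ : pdom σ ⊆ ↑b),
      ⋃ σ' ∈ SGfin G, ⋃ (_ : σ ⊆ σ') (_ : pdom σ' = ↑b), prev σ' x) ∩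
    (⋂ a : Finset ℕ, ⋂ (_ : prng σ ⊆ ↑a),
      ⋃ σ' ∈ SGfin G, ⋃ (_ : σ ⊆ σ') (_ : prng σ' = ↑a), prev σ' x)

/-- The `α`-sets `B_α(x, σ)`, for `α ≥ 1` (the value at `α = 0` is junk). -/
def Bset (A : ℕ → Set X) (α : Ordinal.{0}) : Set (ℕ × ℕ) → X → Set X :=
  @Ordinal.limitRecOn (fun _ => Set (ℕ × ℕ) → X → Set X) α
    (fun _ _ => univ)
    (fun o ih => if o = 0 then BsetOne G A else BsetSucc G ih)
    (fun o _ ih σ x => ⋂ β : Ordinal.{0}, ⋂ (hβ : β < o), ⋂ (_ : 1 ≤ β), ih β hβ σ x)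

/-- The family `𝓑^x_{<α}` consisting of the basic open sets together with all
`β`-sets of `x` for `1 ≤ β < α`. -/
def BltFam (A : ℕ → Set X) (x : X) (α : Ordinal.{0}) : Set (Set X) :=
  {B | (∃ l, B = A l) ∨
    ∃ β : Ordinal.{0}, 1 ≤ β ∧ β < α ∧ ∃ σ ∈ SGfin G, B = Bset G A β σ x}

/-- `γ^G_*(x)`: the least countable ordinal `γ` such that for all `σ, δ ∈ S^G_{<∞}`
with equal ranges, if `B_α(x,σ) ≠ B_α(x,δ)` for some countable ordinal `α ≥ 1`,
then already `B_γ(x,σ) ≠ B_γ(x,δ)`. -/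
def gammaStar (A : ℕ → Set X) (x : X) : Ordinal :=
  sInf {γ : Ordinal.{0} | γ.card ≤ Cardinal.aleph0 ∧
    ∀ σ ∈ SGfin G, ∀ δ ∈ SGfin G, prng σ = prng δ →
      (∃ α : Ordinal.{0}, 1 ≤ α ∧ α.card ≤ Cardinal.aleph0 ∧
        Bset G A α σ x ≠ Bset G A α δ x) →
      Bset G A γ σ x ≠ Bset G A γ δ x}

end Action

/-- The topology on a subset `S ⊆ X` generated by the traces on `S` of the members
of the family `F`. -/
def traceTop {X : Type*} (S : Set X) (F : Set (Set X)) : TopologicalSpace S :=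
  TopologicalSpace.generateFrom {u : Set S | ∃ B ∈ F, u = Subtype.val ⁻¹' B}

/-- The space of closed subsets of `Y`. -/
def EffrosSpace (Y : Type*) [TopologicalSpace Y] := {K : Set Y // IsClosed K}

/-- The Effros Borel structure on the space of closed subsets of `Y`. -/
def effrosSigma (Y : Type*) [TopologicalSpace Y] : MeasurableSpace (EffrosSpace Y) :=
  MeasurableSpace.generateFrom
    {S | ∃ U : Set Y, IsOpen U ∧ S = {K : EffrosSpace Y | (K.1 ∩ U).Nonempty}}

/-!
Both `σ ∘ f` and `f ∘ σ` are relabellings `h⁻¹ ∘ σ ∘ g` with `g, h ∈ G`, and by induction on `α`,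
`B_α(x, h⁻¹ ∘ σ ∘ g) = h⁻¹ · B_α(g · x, σ)`.

For `α = 1`, `y ∈ B₁(x, σ)` says that `V_σ · x` and `V_{rng σ} · y` meet the same basic open
sets, i.e. have the same closure. Relabelling conjugates both `V`-sets, which translates the two
orbits by `h⁻¹`, and translation by `h⁻¹` is a homeomorphism. At successor steps relabelling is
a bijection of `S^G_{<∞}` preserving extension and moving domains and ranges by permutations of
`ℕ`, so it merely reindexes the intersections over finite supersets and the unions over
extensions. Limit steps are intersections. Finally, a relabelling by permutations fixing
`dom σ` and `rng σ` pointwise is `σ` itself.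
-/

open TopologicalSpace

/-- The graph of `h⁻¹ ∘ σ ∘ g`. -/
def relabel (g h : Sinf) (σ : Set (ℕ × ℕ)) : Set (ℕ × ℕ) := {p | (g p.1, h p.2) ∈ σ}

theorem compR_eq_relabel (σ : Set (ℕ × ℕ)) (f : Sinf) : compR σ f = relabel f 1 σ := rfl

theorem compL_eq_relabel (f : Sinf) (σ : Set (ℕ × ℕ)) : compL f σ = relabel 1 f⁻¹ σ := rfl

section Relabel

variable {G : Subgroup Sinf}

theorem mem_pdom {σ : Set (ℕ × ℕ)} {k : ℕ} : k ∈ pdom σ ↔ ∃ m, (k, m) ∈ σ := by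
  simp [pdom]

theorem mem_prng {σ : Set (ℕ × ℕ)} {m : ℕ} : m ∈ prng σ ↔ ∃ k, (k, m) ∈ σ := by
  simp [prng]

theorem relabel_relabel (g h g' h' : Sinf) (σ : Set (ℕ × ℕ)) :
    relabel g h (relabel g' h' σ) = relabel (g' * g) (h' * h) σ := rfl

theorem relabel_one_one (σ : Set (ℕ × ℕ)) : relabel 1 1 σ = σ := rfl

theorem relabel_inv_relabel (g h : Sinf) (σ : Set (ℕ × ℕ)) :
    relabel g⁻¹ h⁻¹ (relabel g h σ) = σ := by
  rw [relabel_relabel, mul_inv_cancel, mul_inv_cancel, relabel_one_one]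

theorem relabel_relabel_inv (g h : Sinf) (σ : Set (ℕ × ℕ)) :
    relabel g h (relabel g⁻¹ h⁻¹ σ) = σ := by
  rw [relabel_relabel, inv_mul_cancel, inv_mul_cancel, relabel_one_one]

def relabelEquiv (g h : Sinf) : Set (ℕ × ℕ) ≃ Set (ℕ × ℕ) where
  toFun := relabel g h
  invFun := relabel g⁻¹ h⁻¹
  left_inv := relabel_inv_relabel g h
  right_inv := relabel_relabel_inv g h

theorem relabel_mono {g h : Sinf} {σ τ : Set (ℕ × ℕ)} (hst : σ ⊆ τ) :
    relabel g h σ ⊆ relabel g h τ := fun _ hp => hst hp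

theorem relabel_subset_relabel_iff {g h : Sinf} {σ τ : Set (ℕ × ℕ)} :
    relabel g h σ ⊆ relabel g h τ ↔ σ ⊆ τ := by
  refine ⟨fun hst => ?_, relabel_mono⟩
  simpa only [relabel_inv_relabel] using relabel_mono (g := g⁻¹) (h := h⁻¹) hst

theorem pdom_relabel (g h : Sinf) (σ : Set (ℕ × ℕ)) : pdom (relabel g h σ) = ⇑g ⁻¹' pdom σ := by
  ext k
  simp only [mem_pdom, relabel, mem_ofPred_eq, mem_preimage]
  exact (h.surjective.exists (p := fun m => (g k, m) ∈ σ)).symm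

theorem prng_relabel (g h : Sinf) (σ : Set (ℕ × ℕ)) : prng (relabel g h σ) = ⇑h ⁻¹' prng σ := by
  ext m
  simp only [mem_prng, relabel, mem_ofPred_eq, mem_preimage]
  exact (g.surjective.exists (p := fun k => (k, h m) ∈ σ)).symm

theorem relabel_mem_SGfin {g h : Sinf} (hg : g ∈ G) (hh : h ∈ G) {σ : Set (ℕ × ℕ)}
    (hσ : σ ∈ SGfin G) : relabel g h σ ∈ SGfin G := by
  obtain ⟨k, hk, d, rfl⟩ := hσ
  refine ⟨h⁻¹ * k * g, G.mul_mem (G.mul_mem (G.inv_mem hh) hk) hg, d.map g.symm.toEmbedding, ?_⟩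
  ext ⟨a, b⟩
  simp [relabel, restr, Equiv.Perm.inv_def, Equiv.symm_apply_eq]

theorem relabel_mem_SGfin_iff {g h : Sinf} (hg : g ∈ G) (hh : h ∈ G) {σ : Set (ℕ × ℕ)} :
    relabel g h σ ∈ SGfin G ↔ σ ∈ SGfin G := by
  refine ⟨fun hσ => ?_, relabel_mem_SGfin hg hh⟩
  simpa only [relabel_inv_relabel] using relabel_mem_SGfin (G.inv_mem hg) (G.inv_mem hh) hσ

theorem relabel_eq_self {g h : Sinf} {σ : Set (ℕ × ℕ)} (hg : ∀ k ∈ pdom σ, g k = k)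
    (hh : ∀ m ∈ prng σ, h m = m) : relabel g h σ = σ := by
  ext ⟨k, m⟩
  refine ⟨fun hp => ?_, fun hp => ?_⟩
  · have hk : g (g k) = g k := hg _ (mem_pdom.2 ⟨_, hp⟩)
    have hm : h (h m) = h m := hh _ (mem_prng.2 ⟨_, hp⟩)
    rwa [relabel, mem_ofPred_eq, g.injective hk, h.injective hm] at hp
  · rwa [relabel, mem_ofPred_eq, hg k (mem_pdom.2 ⟨_, hp⟩), hh m (mem_prng.2 ⟨_, hp⟩)]

end Relabel

theorem TopologicalSpace.IsTopologicalBasis.closure_eq_closure_iff {α : Type*}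
    [TopologicalSpace α] {B : Set (Set α)} (hB : IsTopologicalBasis B) {s t : Set α} :
    closure s = closure t ↔ ∀ u ∈ B, ((s ∩ u).Nonempty ↔ (t ∩ u).Nonempty) := by
  refine ⟨fun hst u hu => ?_, fun H => ?_⟩
  · rw [← closure_inter_open_nonempty_iff (hB.isOpen hu), hst,
      closure_inter_open_nonempty_iff (hB.isOpen hu)]
  · ext z
    simp only [hB.mem_closure_iff, inter_comm _ s, inter_comm _ t]
    exact forall₂_congr fun u hu => imp_congr_right fun _ => H u hu

section Succ

variable {G : Subgroup Sinf} {X : Type*}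

theorem iInter_iUnion_relabel {g h : Sinf} (hg : g ∈ G) (hh : h ∈ G)
    {D : Set (ℕ × ℕ) → Set ℕ} {π : Sinf} (hD : ∀ τ, D (relabel g h τ) = ⇑π ⁻¹' D τ)
    (F : Set (ℕ × ℕ) → Set X) (σ : Set (ℕ × ℕ)) :
    (⋂ b : Finset ℕ, ⋂ (_ : D (relabel g h σ) ⊆ ↑b),
      ⋃ σ' ∈ SGfin G, ⋃ (_ : relabel g h σ ⊆ σ') (_ : D σ' = ↑b), F σ') =
    ⋂ b : Finset ℕ, ⋂ (_ : D σ ⊆ ↑b),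
      ⋃ σ' ∈ SGfin G, ⋃ (_ : σ ⊆ σ') (_ : D σ' = ↑b), F (relabel g h σ') := by
  ext y
  simp only [mem_iInter, mem_iUnion, exists_prop]
  rw [π.symm.finsetCongr.symm.forall_congr_left]
  refine forall_congr' fun b => ?_
  rw [(relabelEquiv g h).symm.exists_congr_left]
  simp [relabelEquiv, hD, relabel_mem_SGfin_iff hg hh, relabel_subset_relabel_iff,
    Equiv.finsetCongr_apply, Equiv.image_eq_preimage_symm,
    preimage_eq_preimage π.surjective]

theorem BsetSucc_congr {prev prev' : Set (ℕ × ℕ) → X → Set X} {σ : Set (ℕ × ℕ)} {x x' : X}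
    (h : ∀ τ, prev τ x = prev' τ x') : BsetSucc G prev σ x = BsetSucc G prev' σ x' := by
  simp only [BsetSucc, h]

theorem BsetSucc_relabel {g h : Sinf} (hg : g ∈ G) (hh : h ∈ G)
    (prev : Set (ℕ × ℕ) → X → Set X) (σ : Set (ℕ × ℕ)) (x : X) :
    BsetSucc G prev (relabel g h σ) x = BsetSucc G (fun τ => prev (relabel g h τ)) σ x := by
  simp only [BsetSucc, iInter_iUnion_relabel hg hh (pdom_relabel g h),
    iInter_iUnion_relabel hg hh (prng_relabel g h)]

end Succ

section Action

variable {G : Subgroup Sinf} {X : Type*} [MulAction G X]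

theorem mem_Vb_relabel {g h k : G} {σ : Set (ℕ × ℕ)} :
    k ∈ Vb G (relabel g h σ) ↔ h * k * g⁻¹ ∈ Vb G σ := by
  simp only [Vb, relabel, mem_ofPred_eq]
  exact (Equiv.prodCongr (g : Sinf) (h : Sinf)).forall_congr fun p => by simp [Prod.map]

theorem Vc_eq_Vb_idb (c : Set ℕ) : Vc G c = Vb G (idb c) := by
  ext k
  simp [Vc, Vb, idb]

theorem idb_preimage (h : Sinf) (c : Set ℕ) : idb (⇑h ⁻¹' c) = relabel h h (idb c) := by
  ext ⟨k, m⟩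
  simp [idb, relabel]

theorem setOrb_Vb_relabel (g h : G) (σ : Set (ℕ × ℕ)) (x : X) :
    setOrb G (Vb G (relabel g h σ)) x = h⁻¹ • setOrb G (Vb G σ) (g • x) := by
  ext y
  simp only [setOrb, mem_image, mem_smul_set]
  constructor
  · rintro ⟨k, hk, rfl⟩
    exact ⟨_, ⟨h * k * g⁻¹, mem_Vb_relabel.1 hk, rfl⟩, by simp [smul_smul, mul_assoc]⟩
  · rintro ⟨_, ⟨k, hk, rfl⟩, rfl⟩
    exact ⟨h⁻¹ * k * g, mem_Vb_relabel.2 (by simpa [mul_assoc] using hk),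
      by simp [smul_smul, mul_assoc]⟩

theorem setOrb_Vc_preimage (h : G) (c : Set ℕ) (y : X) :
    setOrb G (Vc G (⇑(h : Sinf) ⁻¹' c)) y = h⁻¹ • setOrb G (Vc G c) (h • y) := by
  rw [Vc_eq_Vb_idb, Vc_eq_Vb_idb, idb_preimage, setOrb_Vb_relabel]

theorem inv_Vc (c : Set ℕ) : (Vc G c)⁻¹ = Vc G c := by
  ext k
  simp only [Vc, mem_inv, mem_ofPred_eq, InvMemClass.coe_inv]
  exact forall₂_congr fun m _ => Equiv.Perm.inv_eq_iff_eq.trans eq_comm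

theorem mem_setSmul_iff {S : Set G} {B : Set X} {y : X} :
    y ∈ setSmul G S B ↔ (setOrb G S⁻¹ y ∩ B).Nonempty := by
  simp only [setSmul, setOrb, mem_iUnion, exists_prop, mem_smul_set_iff_inv_smul_mem]
  constructor
  · rintro ⟨k, hk, hy⟩
    exact ⟨_, ⟨k⁻¹, by simpa using hk, rfl⟩, hy⟩
  · rintro ⟨_, ⟨k, hk, rfl⟩, hy⟩
    exact ⟨k⁻¹, hk, by simpa using hy⟩

theorem mem_BsetOne_iff {A : ℕ → Set X} {σ : Set (ℕ × ℕ)} {x y : X} :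
    y ∈ BsetOne G A σ x ↔ ∀ l,
      ((setOrb G (Vb G σ) x ∩ A l).Nonempty ↔ (setOrb G (Vc G (prng σ)) y ∩ A l).Nonempty) := by
  simp only [BsetOne, mem_inter_iff, mem_iInter, mem_compl_iff, mem_setSmul_iff, inv_Vc,
    ← not_nonempty_iff_eq_empty, not_imp_not, ← forall_and, ← iff_iff_implies_and_implies]

theorem smul_BsetSucc (f : G) (prev : Set (ℕ × ℕ) → X → Set X) (σ : Set (ℕ × ℕ)) (x : X) :
    f • BsetSucc G prev σ x = BsetSucc G (fun τ y => f • prev τ y) σ x := by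
  simp only [BsetSucc, smul_set_inter, smul_set_iInter, smul_set_iUnion]

theorem Bset_zero (A : ℕ → Set X) : Bset G A 0 = fun _ _ => univ := by
  rw [Bset, Ordinal.limitRecOn_zero]

theorem Bset_add_one (A : ℕ → Set X) (o : Ordinal.{0}) :
    Bset G A (o + 1) = if o = 0 then BsetOne G A else BsetSucc G (Bset G A o) := by
  rw [Bset, Ordinal.limitRecOn_add_one]
  rfl

theorem Bset_of_isSuccLimit (A : ℕ → Set X) {o : Ordinal.{0}} (ho : Order.IsSuccLimit o)
    (σ : Set (ℕ × ℕ)) (x : X) :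
    Bset G A o σ x = ⋂ β, ⋂ (_ : β < o), ⋂ (_ : 1 ≤ β), Bset G A β σ x := by
  rw [Bset, Ordinal.limitRecOn_limit _ _ _ _ ho]
  rfl

variable [TopologicalSpace X] {A : ℕ → Set X}

theorem mem_BsetOne_iff_closure_eq (hA : IsTopologicalBasis (range A))
    {σ : Set (ℕ × ℕ)} {x y : X} :
    y ∈ BsetOne G A σ x ↔
      closure (setOrb G (Vb G σ) x) = closure (setOrb G (Vc G (prng σ)) y) := by
  rw [mem_BsetOne_iff, hA.closure_eq_closure_iff, forall_mem_range]

variable [ContinuousConstSMul G X]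

theorem BsetOne_relabel (hA : IsTopologicalBasis (range A)) (g h : G)
    (σ : Set (ℕ × ℕ)) (x : X) :
    BsetOne G A (relabel g h σ) x = h⁻¹ • BsetOne G A σ (g • x) := by
  ext y
  rw [mem_inv_smul_set_iff, mem_BsetOne_iff_closure_eq hA, mem_BsetOne_iff_closure_eq hA,
    setOrb_Vb_relabel, prng_relabel, setOrb_Vc_preimage, closure_smul, closure_smul,
    smul_left_cancel_iff]

theorem Bset_relabel (hA : IsTopologicalBasis (range A)) (g h : G) (α : Ordinal.{0})
    (σ : Set (ℕ × ℕ)) (x : X) :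
    Bset G A α (relabel g h σ) x = h⁻¹ • Bset G A α σ (g • x) := by
  induction α using Ordinal.limitRecOn generalizing σ x with
  | zero => simp [Bset_zero]
  | add_one o ih =>
    rw [Bset_add_one]
    split_ifs
    · exact BsetOne_relabel hA g h σ x
    · rw [BsetSucc_relabel g.2 h.2, smul_BsetSucc]
      exact BsetSucc_congr fun τ => ih τ x
  | limit o ho ih =>
    simp only [Bset_of_isSuccLimit A ho, smul_set_iInter]
    exact iInter₂_congr fun β hβ => iInter_congr fun _ => ih β hβ σ x

end Action

theorem alphaSet_equivariance_general
    (G : Subgroup Sinf)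
    {X : Type*} [TopologicalSpace X] [MulAction G X] [ContinuousSMul G X]
    (A : ℕ → Set X) (hbasis : TopologicalSpace.IsTopologicalBasis (Set.range A))
    (x : X) (σ : Set (ℕ × ℕ)) (f : G)
    (α : Ordinal.{0}) :
    (Bset G A α σ (f • x) = Bset G A α (compR σ (f : Sinf)) x) ∧
    (f ∈ Vc G (pdom σ) → Bset G A α σ (f • x) = Bset G A α σ x) ∧
    (f • Bset G A α σ x = Bset G A α (compL (f : Sinf) σ) x) ∧
    (f ∈ Vc G (prng σ) → f • Bset G A α σ x = Bset G A α σ x) := by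
  have hR : Bset G A α σ (f • x) = Bset G A α (compR σ f) x := by
    simpa [compR_eq_relabel] using (Bset_relabel hbasis f 1 α σ x).symm
  have hL : f • Bset G A α σ x = Bset G A α (compL f σ) x := by
    simpa [compL_eq_relabel] using (Bset_relabel hbasis 1 f⁻¹ α σ x).symm
  refine ⟨hR, fun hf => ?_, hL, fun hf => ?_⟩
  · rw [hR, compR_eq_relabel, relabel_eq_self hf fun _ _ => rfl]
  · have hf' : f⁻¹ ∈ Vc G (prng σ) := inv_Vc (prng σ) ▸ inv_mem_inv.2 hf
    rw [hL, compL_eq_relabel, relabel_eq_self (g := 1) (h := (f : Sinf)⁻¹) (fun _ _ => rfl) hf']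

/-- Equivariance of α-sets. -/
theorem alphaSet_equivariance
    (G : Subgroup Sinf) (hGclosed : IsClosed (G : Set Sinf))
    {X : Type*} [TopologicalSpace X] [PolishSpace X] [MulAction G X] [ContinuousSMul G X]
    (A : ℕ → Set X) (hbasis : TopologicalSpace.IsTopologicalBasis (Set.range A))
    (hbasisInv : ∀ l, ∃ c : Finset ℕ, ∀ g ∈ Vc G (↑c : Set ℕ), g • A l = A l)
    (x : X) (σ : Set (ℕ × ℕ)) (hσ : σ ∈ SGfin G) (f : G)
    (α : Ordinal.{0}) (hα : 1 ≤ α) (hαc : α.card ≤ Cardinal.aleph0) :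
    (Bset G A α σ (f • x) = Bset G A α (compR σ (f : Sinf)) x) ∧
    (f ∈ Vc G (pdom σ) → Bset G A α σ (f • x) = Bset G A α σ x) ∧
    (f • Bset G A α σ x = Bset G A α (compL (f : Sinf) σ) x) ∧
    (f ∈ Vc G (prng σ) → f • Bset G A α σ x = Bset G A α σ x) :=
  alphaSet_equivariance_general G A hbasis x σ f α
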